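/- arXiv:2602.18047 — 3 statements merged into one kernel-verified Lean document; each statement's English description precedes it below -/
import Mathlib

section
/- Let P and Q be probability measures on a measurable space H with P absolutely continuous with respect to Q, and let f : H → ℝ be measurable such that f is P-integrable and exp∘f is Q-integrable. Then ∫ f dP ≤ KL(P ‖ Q) + ln( ∫ exp(f(h)) dQ(h) ), where KL denotes the Kullback–Leibler divergence. -/
/-! Tilting `Q` by `f` gives the probability measure `Q_f = exp f / ∫ exp f dQ • Q`, and
`log (dP/dQ_f) = log (dP/dQ) - f + log ∫ exp f dQ`. Integrating against `P`, Gibbs' inequality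
`0 ≤ KL(P ‖ Q_f)` is exactly the claim. -/

open MeasureTheory

/-- Kullback–Leibler divergence (real-valued), `∫ log (dP/dQ) dP`. -/
noncomputable def klDiv {H : Type*} [MeasurableSpace H] (P Q : Measure H) : ℝ :=
  ∫ h, Real.log ((P.rnDeriv Q) h).toReal ∂P

namespace MeasureTheory

open Real

variable {α : Type*} [MeasurableSpace α] {μ ν : Measure α} {f : α → ℝ}

theorem integral_le_integral_llr_add_log_integral_exp [IsProbabilityMeasure μ] [SigmaFinite ν]
    (hμν : μ ≪ ν) (hfμ : Integrable f μ) (hfν : Integrable (fun x ↦ exp (f x)) ν)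
    (h_int : Integrable (llr μ ν) μ) :
    ∫ x, f x ∂μ ≤ ∫ x, llr μ ν x ∂μ + log (∫ x, exp (f x) ∂ν) := by
  have : NeZero ν := ⟨fun hν ↦ IsProbabilityMeasure.ne_zero μ
    (Measure.absolutelyContinuous_zero_iff.mp (hν ▸ hμν))⟩
  have : IsProbabilityMeasure (ν.tilted f) := isProbabilityMeasure_tilted hfν
  have gibbs := InformationTheory.integral_llr_add_sub_measure_univ_nonneg
    (hμν.trans (absolutelyContinuous_tilted hfν)) (integrable_llr_tilted_right hμν hfμ h_int hfν)
  rw [integral_llr_tilted_right hμν hfμ hfν h_int] at gibbs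
  simp only [probReal_univ, add_sub_cancel_right] at gibbs
  linarith

end MeasureTheory

theorem stmt2_general {H : Type*} [MeasurableSpace H] (P Q : Measure H)
    [IsProbabilityMeasure P] [IsProbabilityMeasure Q] (hPQ : P ≪ Q)
    (f : H → ℝ) (hfP : Integrable f P)
    (hexp : Integrable (fun h => Real.exp (f h)) Q)
    (hlog : Integrable (fun h => Real.log ((P.rnDeriv Q) h).toReal) P) :
    ∫ h, f h ∂P ≤ klDiv P Q + Real.log (∫ h, Real.exp (f h) ∂Q) :=
  integral_le_integral_llr_add_log_integral_exp hPQ hfP hexp hlog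

/-- Donsker–Varadhan change-of-measure inequality:
`∫ f dP ≤ KL(P‖Q) + ln (∫ exp (f h) dQ h)`. -/
theorem stmt2 {H : Type*} [MeasurableSpace H] (P Q : Measure H)
    [IsProbabilityMeasure P] [IsProbabilityMeasure Q] (hPQ : P ≪ Q)
    (f : H → ℝ) (hf : Measurable f) (hfP : Integrable f P)
    (hexp : Integrable (fun h => Real.exp (f h)) Q)
    (hlog : Integrable (fun h => Real.log ((P.rnDeriv Q) h).toReal) P) :
    ∫ h, f h ∂P ≤ klDiv P Q + Real.log (∫ h, Real.exp (f h) ∂Q) :=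
  stmt2_general P Q hPQ f hfP hexp hlog
end

section
/- Let Z be a measurable space equipped with a probability measure μ, let H be a measurable hypothesis space, and let ℓ : H × Z → ℝ be jointly measurable with values in [0,1]. Define the population risk R(h) = ∫ ℓ(h,z) dμ(z) and, for a sample S = (z_1,…,z_n), the empirical risk R̂_S(h) = (1/n) Σ_{j=1}^n ℓ(h,z_j). Let Q be a probability measure (prior) on H, let S ↦ P(S) be a measurable map from Z^n to probability measures on H (posterior), and fix λ > 0 and δ₀ ∈ (0,1). Then with probability at least 1−δ₀ over S drawn from the n-fold product measure μ^{⊗n}, one has ∫ R(h) dP(S)(h) ≤ ∫ R̂_S(h) dP(S)(h) + ( KL(P(S) ‖ Q) + λ²/(8n) + ln(1/δ₀) ) / λ, where KL denotes the Kullback–Leibler divergence. -/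
/-!
For a fixed hypothesis `h`, the gap `R h - R̂_S h` is an average of `n` independent centred
`[0,1]`-bounded terms, so by Hoeffding's lemma `exp (λ (R h - R̂_S h))` has mean at most
`exp (λ² / (8n))` under `μ^⊗n`. Integrating against the prior `Q` (Fubini) and applying Markov's
inequality, with probability at least `1 - δ₀` the `Q`-average of `exp (λ (R - R̂_S))` stays below
`exp (λ² / (8n)) / δ₀`. On that event the Donsker–Varadhan inequality
`∫ f dP ≤ KL(P‖Q) + log ∫ exp f dQ` gives the bound for every posterior at once.
-/

open MeasureTheory ProbabilityTheory Real
open scoped ENNReal NNReal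

section DonskerVaradhan

variable {α : Type*} [MeasurableSpace α] {μ ν : Measure α}

lemma integral_llr_nonneg [IsProbabilityMeasure μ] [IsProbabilityMeasure ν] (hμν : μ ≪ ν)
    (h_int : Integrable (llr μ ν) μ) : 0 ≤ ∫ x, llr μ ν x ∂μ := by
  simpa using InformationTheory.integral_llr_add_sub_measure_univ_nonneg hμν h_int

lemma integral_le_integral_llr_add_log_integral_exp [IsProbabilityMeasure μ] [SigmaFinite ν]
    (hμν : μ ≪ ν) (h_int : Integrable (llr μ ν) μ) {f : α → ℝ} (hfμ : Integrable f μ)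
    (hfν : Integrable (fun x ↦ exp (f x)) ν) :
    ∫ x, f x ∂μ ≤ ∫ x, llr μ ν x ∂μ + log (∫ x, exp (f x) ∂ν) := by
  have : NeZero ν := ⟨fun h ↦ IsProbabilityMeasure.ne_zero μ (by simpa [h] using hμν)⟩
  have : IsProbabilityMeasure (ν.tilted f) := isProbabilityMeasure_tilted hfν
  -- Gibbs' inequality against the Gibbs measure `ν.tilted f`
  have h_gibbs := integral_llr_nonneg (hμν.trans (absolutelyContinuous_tilted hfν))
    (integrable_llr_tilted_right hμν hfμ h_int hfν)
  rw [integral_llr_tilted_right hμν hfμ hfν h_int] at h_gibbs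
  linarith

end DonskerVaradhan

lemma integral_exp_mul_sub_empiricalMean_le {Z : Type*} [MeasurableSpace Z] (μ : Measure Z)
    [IsProbabilityMeasure μ] {n : ℕ} (hn : 0 < n) {f : Z → ℝ} (hf : AEMeasurable f μ) {a b : ℝ}
    (hfab : ∀ᵐ z ∂μ, f z ∈ Set.Icc a b) (t : ℝ) :
    ∫ S, exp (t * (∫ z, f z ∂μ - (n : ℝ)⁻¹ * ∑ j, f (S j))) ∂(Measure.pi fun _ : Fin n ↦ μ)
      ≤ exp ((b - a) ^ 2 * t ^ 2 / (8 * n)) := by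
  set X : Z → ℝ := fun z ↦ ∫ z, f z ∂μ - f z
  have hX : HasSubgaussianMGF X ((‖b - a‖₊ / 2) ^ 2) μ := by
    simpa [X, Pi.neg_def] using (hasSubgaussianMGF_of_mem_Icc hf hfab).neg
  have hXj (j : Fin n) : HasSubgaussianMGF (fun S : Fin n → Z ↦ X (S j)) ((‖b - a‖₊ / 2) ^ 2)
      (Measure.pi fun _ ↦ μ) :=
    HasSubgaussianMGF.of_map (X := X) (measurable_pi_apply j).aemeasurable
      (by rwa [(measurePreserving_eval (fun _ ↦ μ) j).map_eq])
  have hsum := HasSubgaussianMGF.sum_of_iIndepFun (s := Finset.univ)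
    (iIndepFun_pi (μ := fun _ : Fin n ↦ μ) (X := fun _ ↦ X) fun _ ↦ aemeasurable_const.sub hf)
    fun j _ ↦ hXj j
  have hn' : (n : ℝ) ≠ 0 := by positivity
  convert hsum.mgf_le (t / n) using 1
  · congr 1 with S
    simp only [X, Finset.sum_sub_distrib, Finset.sum_const, Finset.card_univ, Fintype.card_fin,
      nsmul_eq_mul]
    field_simp
  · congr 1
    simp only [Finset.sum_const, Finset.card_univ, Fintype.card_fin, nsmul_eq_mul,
      NNReal.coe_mul, NNReal.coe_natCast, NNReal.coe_pow, NNReal.coe_div, coe_nnnorm,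
      Real.norm_eq_abs, NNReal.coe_ofNat, div_pow, sq_abs]
    field_simp
    ring

lemma integral_mem_Icc {α : Type*} [MeasurableSpace α] {μ : Measure α} [IsProbabilityMeasure μ]
    {f : α → ℝ} (hf : AEMeasurable f μ) {a b : ℝ} (hfab : ∀ᵐ x ∂μ, f x ∈ Set.Icc a b) :
    ∫ x, f x ∂μ ∈ Set.Icc a b := by
  have hf_int := Integrable.of_mem_Icc a b hf hfab
  exact ⟨by simpa using integral_mono_ae (integrable_const a) hf_int (hfab.mono fun _ hx ↦ hx.1),
    by simpa using integral_mono_ae hf_int (integrable_const b) (hfab.mono fun _ hx ↦ hx.2)⟩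

lemma inv_mul_sum_mem_Icc_zero_one {n : ℕ} {x : Fin n → ℝ} (hx : ∀ j, x j ∈ Set.Icc (0 : ℝ) 1) :
    (n : ℝ)⁻¹ * ∑ j, x j ∈ Set.Icc (0 : ℝ) 1 := by
  have h_sum : ∑ j, x j ≤ n := by
    simpa using Finset.sum_le_card_nsmul Finset.univ x 1 fun j _ ↦ (hx j).2
  exact ⟨mul_nonneg (by positivity) (Finset.sum_nonneg fun j _ ↦ (hx j).1),
    inv_mul_le_one_of_le₀ h_sum (Nat.cast_nonneg n)⟩

lemma measurable_inv_mul_sum_apply {Z H : Type*} [MeasurableSpace Z] [MeasurableSpace H] {n : ℕ}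
    {ℓ : H → Z → ℝ} (hℓ : Measurable fun p : H × Z => ℓ p.1 p.2) :
    Measurable fun p : (Fin n → Z) × H ↦ (n : ℝ)⁻¹ * ∑ j, ℓ p.2 (p.1 j) :=
  .const_mul (Finset.measurable_sum _ fun j _ ↦
    hℓ.comp (measurable_snd.prodMk ((measurable_pi_apply j).comp measurable_fst))) _

lemma ofReal_one_sub_le_measure_integral_exp_lt {Ω H : Type*} [MeasurableSpace Ω] [MeasurableSpace H]
    (ν : Measure Ω) [IsProbabilityMeasure ν] (Q : Measure H) [IsProbabilityMeasure Q]
    {F : Ω → H → ℝ} (hF : Measurable (Function.uncurry F)) {C : ℝ} (hFC : ∀ ω h, |F ω h| ≤ C)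
    {K : ℝ} (hK : ∀ h, ∫ ω, exp (F ω h) ∂ν ≤ exp K) {δ : ℝ} (hδ : 0 < δ) :
    ENNReal.ofReal (1 - δ) ≤ ν {ω | ∫ h, exp (F ω h) ∂Q < exp K / δ} := by
  have hexpF : Measurable fun p : Ω × H ↦ exp (F p.1 p.2) := hF.exp
  have hexpF_le (ω h) : ‖exp (F ω h)‖ ≤ exp C := by
    rw [Real.norm_eq_abs, abs_exp]
    exact exp_le_exp.2 ((le_abs_self _).trans (hFC ω h))
  set g : Ω → ℝ := fun ω ↦ ∫ h, exp (F ω h) ∂Q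
  have hg : Measurable g := hexpF.stronglyMeasurable.integral_prod_right'.measurable
  have hg_int : Integrable g ν := by
    refine .of_bound hg.aestronglyMeasurable (exp C) (.of_forall fun ω ↦ ?_)
    refine (norm_integral_le_of_norm_le_const (.of_forall (hexpF_le ω))).trans ?_
    simp
  have hg_integral : ∫ ω, g ω ∂ν ≤ exp K := by
    rw [integral_integral_swap
      (.of_bound hexpF.aestronglyMeasurable (exp C) (.of_forall fun p ↦ hexpF_le p.1 p.2))]
    calc ∫ h, ∫ ω, exp (F ω h) ∂ν ∂Q ≤ ∫ _, exp K ∂Q :=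
          integral_mono_of_nonneg (.of_forall fun _ ↦ integral_nonneg fun _ ↦ (exp_pos _).le)
            (integrable_const _) (.of_forall hK)
      _ = exp K := by simp
  have h_markov : ν.real {ω | exp K / δ ≤ g ω} ≤ δ := by
    have := (mul_meas_ge_le_integral_of_nonneg
      (.of_forall fun ω ↦ integral_nonneg fun _ ↦ (exp_pos _).le) hg_int (exp K / δ)).trans
      hg_integral
    rwa [div_mul_eq_mul_div, div_le_iff₀ hδ, mul_le_mul_iff_right₀ (exp_pos K)] at this
  have h_compl : {ω | g ω < exp K / δ} = {ω | exp K / δ ≤ g ω}ᶜ := by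
    ext ω; simp
  rw [← ofReal_measureReal (measure_ne_top _ _), h_compl,
    probReal_compl_eq_one_sub (measurableSet_le measurable_const hg)]
  exact ENNReal.ofReal_le_ofReal (by linarith)

theorem pacBayes_of_integral_exp_le {Ω H : Type*} [MeasurableSpace Ω] [MeasurableSpace H]
    (ν : Measure Ω) [IsProbabilityMeasure ν] (Q : Measure H) [IsProbabilityMeasure Q]
    {F : Ω → H → ℝ} (hF : Measurable (Function.uncurry F)) {C : ℝ} (hFC : ∀ ω h, |F ω h| ≤ C)
    {K : ℝ} (hK : ∀ h, ∫ ω, exp (F ω h) ∂ν ≤ exp K) {δ : ℝ} (hδ : 0 < δ) :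
    ENNReal.ofReal (1 - δ) ≤ ν {ω | ∀ P : Measure H, IsProbabilityMeasure P → P ≪ Q →
      Integrable (llr P Q) P → ∫ h, F ω h ∂P ≤ ∫ h, llr P Q h ∂P + K + log (1 / δ)} := by
  refine (ofReal_one_sub_le_measure_integral_exp_lt ν Q hF hFC hK hδ).trans
    (measure_mono fun ω hω P _ hPQ hP ↦ ?_)
  have hFω : Measurable (F ω) := hF.comp measurable_prodMk_left
  have hexp_int : Integrable (fun h ↦ exp (F ω h)) Q := by
    refine .of_bound hFω.exp.aestronglyMeasurable (exp C) (.of_forall fun h ↦ ?_)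
    rw [Real.norm_eq_abs, abs_exp]
    exact exp_le_exp.2 ((le_abs_self _).trans (hFC ω h))
  have h_log : log (∫ h, exp (F ω h) ∂Q) ≤ K + log (1 / δ) := by
    calc log (∫ h, exp (F ω h) ∂Q) ≤ log (exp K / δ) :=
          log_le_log (integral_exp_pos hexp_int) (le_of_lt hω)
      _ = K + log (1 / δ) := by
          rw [log_div (exp_ne_zero K) hδ.ne', log_exp, one_div, log_inv, sub_eq_add_neg]
  have := integral_le_integral_llr_add_log_integral_exp hPQ hP
    (.of_bound hFω.aestronglyMeasurable C (.of_forall fun h ↦ hFC ω h)) hexp_int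
  linarith

theorem stmt18_general {Z H : Type*} [MeasurableSpace Z] [MeasurableSpace H]
    (μ : Measure Z) [IsProbabilityMeasure μ] (n : ℕ) (hn : 0 < n)
    (ℓ : H → Z → ℝ) (hℓmeas : Measurable fun p : H × Z => ℓ p.1 p.2)
    (hℓ01 : ∀ h z, ℓ h z ∈ Set.Icc (0 : ℝ) 1)
    (Q : Measure H) [IsProbabilityMeasure Q]
    (P : (Fin n → Z) → Measure H)
    (hPprob : ∀ S, IsProbabilityMeasure (P S))
    (hPac : ∀ S, P S ≪ Q)
    (hPint : ∀ S, Integrable (fun h => Real.log (((P S).rnDeriv Q) h).toReal) (P S))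
    (lam : ℝ) (hlam : 0 < lam) (δ₀ : ℝ) (hδ₀ : δ₀ ∈ Set.Ioo (0 : ℝ) 1) :
    ENNReal.ofReal (1 - δ₀) ≤
      (Measure.pi fun _ : Fin n => μ)
        {S | ∫ h, (∫ z, ℓ h z ∂μ) ∂(P S) ≤
              (∫ h, (n : ℝ)⁻¹ * ∑ j, ℓ h (S j) ∂(P S)) +
              (klDiv (P S) Q + lam ^ 2 / (8 * n) + Real.log (1 / δ₀)) / lam} := by
  have hℓ (h : H) : Measurable (ℓ h) := hℓmeas.comp measurable_prodMk_left
  have hR : Measurable fun h ↦ ∫ z, ℓ h z ∂μ :=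
    hℓmeas.stronglyMeasurable.integral_prod_right'.measurable
  have hR01 (h : H) : ∫ z, ℓ h z ∂μ ∈ Set.Icc (0 : ℝ) 1 :=
    integral_mem_Icc (hℓ h).aemeasurable (.of_forall (hℓ01 h))
  have hRS := measurable_inv_mul_sum_apply (n := n) hℓmeas
  have hRS_S (S : Fin n → Z) : Measurable fun h ↦ (n : ℝ)⁻¹ * ∑ j, ℓ h (S j) :=
    hRS.comp measurable_prodMk_left
  have hRS01 (S : Fin n → Z) (h : H) : (n : ℝ)⁻¹ * ∑ j, ℓ h (S j) ∈ Set.Icc (0 : ℝ) 1 :=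
    inv_mul_sum_mem_Icc_zero_one fun j ↦ hℓ01 h (S j)
  have hF : Measurable fun p : (Fin n → Z) × H ↦
      lam * (∫ z, ℓ p.2 z ∂μ - (n : ℝ)⁻¹ * ∑ j, ℓ p.2 (p.1 j)) :=
    ((hR.comp measurable_snd).sub hRS).const_mul lam
  have hFC (S : Fin n → Z) (h : H) :
      |lam * (∫ z, ℓ h z ∂μ - (n : ℝ)⁻¹ * ∑ j, ℓ h (S j))| ≤ lam := by
    rw [abs_mul, abs_of_pos hlam]
    exact mul_le_of_le_one_right hlam.le (Real.dist_le_of_mem_Icc_01 (hR01 h) (hRS01 S h))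
  have hK (h : H) : ∫ S, exp (lam * (∫ z, ℓ h z ∂μ - (n : ℝ)⁻¹ * ∑ j, ℓ h (S j)))
      ∂(Measure.pi fun _ : Fin n ↦ μ) ≤ exp (lam ^ 2 / (8 * n)) := by
    simpa using integral_exp_mul_sub_empiricalMean_le μ hn (hℓ h).aemeasurable
      (.of_forall (hℓ01 h)) lam
  refine (pacBayes_of_integral_exp_le _ Q hF hFC hK hδ₀.1).trans (measure_mono fun S hS ↦ ?_)
  have h_bound := hS (P S) (hPprob S) (hPac S) (hPint S)
  rw [integral_const_mul, integral_sub (.of_mem_Icc 0 1 hR.aemeasurable (.of_forall hR01))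
    (.of_mem_Icc 0 1 (hRS_S S).aemeasurable (.of_forall (hRS01 S)))] at h_bound
  rw [Set.mem_ofPred_eq, ← sub_le_iff_le_add', le_div_iff₀ hlam, mul_comm]
  exact h_bound

/-- PAC-Bayes bound at a fixed scale `λ`: with probability at least `1 − δ₀` over an i.i.d.
sample `S` of size `n`, the posterior-average population risk is bounded by the
posterior-average empirical risk plus `(KL(P(S)‖Q) + λ²/(8n) + ln (1/δ₀)) / λ`. -/
theorem stmt18 {Z H : Type*} [MeasurableSpace Z] [MeasurableSpace H]
    (μ : Measure Z) [IsProbabilityMeasure μ] (n : ℕ) (hn : 0 < n)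
    (ℓ : H → Z → ℝ) (hℓmeas : Measurable fun p : H × Z => ℓ p.1 p.2)
    (hℓ01 : ∀ h z, ℓ h z ∈ Set.Icc (0 : ℝ) 1)
    (Q : Measure H) [IsProbabilityMeasure Q]
    (P : (Fin n → Z) → Measure H) (hPmeas : Measurable P)
    (hPprob : ∀ S, IsProbabilityMeasure (P S))
    (hPac : ∀ S, P S ≪ Q)
    (hPint : ∀ S, Integrable (fun h => Real.log (((P S).rnDeriv Q) h).toReal) (P S))
    (lam : ℝ) (hlam : 0 < lam) (δ₀ : ℝ) (hδ₀ : δ₀ ∈ Set.Ioo (0 : ℝ) 1) :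
    ENNReal.ofReal (1 - δ₀) ≤
      (Measure.pi fun _ : Fin n => μ)
        {S | ∫ h, (∫ z, ℓ h z ∂μ) ∂(P S) ≤
              (∫ h, (n : ℝ)⁻¹ * ∑ j, ℓ h (S j) ∂(P S)) +
              (klDiv (P S) Q + lam ^ 2 / (8 * n) + Real.log (1 / δ₀)) / lam} :=
  stmt18_general μ n hn ℓ hℓmeas hℓ01 Q P hPprob hPac hPint lam hlam δ₀ hδ₀
end

section
/- Let Z be a measurable space equipped with a probability measure μ, let H be a measurable hypothesis space, and let ℓ : H × Z → ℝ be jointly measurable with values in [0,1]. Define the population risk R(h) = ∫ ℓ(h,z) dμ(z) and, for a sample S = (z_1,…,z_n), the empirical risk R̂_S(h) = (1/n) Σ_{j=1}^n ℓ(h,z_j). Let Q be a probability measure (prior) on H, and fix λ > 0 and δ₀ ∈ (0,1). Then with probability at least 1−δ₀ over S drawn from the n-fold product measure μ^{⊗n}, one has ∫_H exp( λ·( R(h) − R̂_S(h) ) ) dQ(h) ≤ exp( λ²/(8n) ) / δ₀. -/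
/-! For a fixed hypothesis `h`, the centred losses `R(h) - ℓ(h, z_j)` are independent under the
product measure and take values in an interval of length one, so by Hoeffding's lemma their sum is
sub-Gaussian with variance proxy `n / 4`; evaluating its moment generating function at `λ / n`
gives `E_S exp (λ (R(h) - R̂_S(h))) ≤ exp (λ² / (8n))`. Fubini moves the sample expectation inside
the `Q`-integral, and Markov's inequality at level `exp (λ² / (8n)) / δ₀` concludes. -/

open MeasureTheory ProbabilityTheory Real Set
open scoped NNReal

theorem ofReal_one_sub_le_measure_le_of_integral_le {α : Type*} [MeasurableSpace α]
    {P : Measure α} [IsProbabilityMeasure P] {G : α → ℝ} (hG0 : 0 ≤ᵐ[P] G) (hG : Integrable G P)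
    {M δ : ℝ} (hM : 0 < M) (hδ : 0 < δ) (hEG : ∫ x, G x ∂P ≤ M) :
    ENNReal.ofReal (1 - δ) ≤ P {x | G x ≤ M / δ} := by
  have hmarkov : P.real {x | M / δ ≤ G x} ≤ δ := by
    have := (mul_meas_ge_le_integral_of_nonneg hG0 hG (M / δ)).trans hEG
    rwa [div_mul_eq_mul_div, div_le_iff₀ hδ, mul_le_mul_iff_right₀ hM] at this
  have hcompl : {x | G x ≤ M / δ}ᶜ ⊆ {x | M / δ ≤ G x} :=
    fun x (hx : ¬G x ≤ M / δ) => (not_le.1 hx).le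
  have hnull : NullMeasurableSet {x | G x ≤ M / δ} P :=
    hG.aemeasurable.nullMeasurable measurableSet_Iic
  rw [← ofReal_measureReal]
  refine ENNReal.ofReal_le_ofReal ?_
  have := measureReal_mono hcompl (μ := P)
  rw [probReal_compl_eq_one_sub₀ hnull] at this
  linarith

theorem integral_integral_le_of_forall_integral_le {α β : Type*} [MeasurableSpace α]
    [MeasurableSpace β] {P : Measure α} {Q : Measure β} [SFinite P] [IsProbabilityMeasure Q]
    {F : α → β → ℝ} (hF : Integrable (Function.uncurry F) (P.prod Q)) {M : ℝ}
    (hM : ∀ y, ∫ x, F x y ∂P ≤ M) :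
    ∫ x, ∫ y, F x y ∂Q ∂P ≤ M := by
  rw [integral_integral_swap hF]
  calc ∫ y, ∫ x, F x y ∂P ∂Q ≤ ∫ _, M ∂Q :=
        integral_mono hF.integral_prod_right (integrable_const M) hM
    _ = M := by simp

section Hoeffding

variable {Z : Type*} [MeasurableSpace Z] (μ : Measure Z) [IsProbabilityMeasure μ] {g : Z → ℝ}
  {a b : ℝ}

theorem hasSubgaussianMGF_sum_integral_sub (hg : Measurable g) (hab : ∀ z, g z ∈ Icc a b)
    (n : ℕ) :
    HasSubgaussianMGF (fun S : Fin n → Z => ∑ j, (∫ z, g z ∂μ - g (S j)))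
      (n * (‖b - a‖₊ / 2) ^ 2) (Measure.pi fun _ => μ) := by
  have hY : HasSubgaussianMGF (fun z => ∫ z, g z ∂μ - g z) ((‖b - a‖₊ / 2) ^ 2) μ := by
    convert (hasSubgaussianMGF_of_mem_Icc hg.aemeasurable (ae_of_all μ hab)).neg using 1
    ext z
    simp
  have hindep := iIndepFun_pi (μ := fun _ : Fin n => μ)
    (X := fun _ z => ∫ z, g z ∂μ - g z) fun _ => (hg.const_sub _).aemeasurable
  have hsum := HasSubgaussianMGF.sum_of_iIndepFun hindep (s := Finset.univ)
    (c := fun _ => (‖b - a‖₊ / 2) ^ 2) fun j _ =>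
    HasSubgaussianMGF.of_map (X := fun z => ∫ z, g z ∂μ - g z) (Y := fun S : Fin n → Z => S j)
      (measurable_pi_apply j).aemeasurable
      (by rwa [(measurePreserving_eval (fun _ => μ) j).map_eq])
  rw [Finset.sum_const, Finset.card_univ, Fintype.card_fin, nsmul_eq_mul] at hsum
  exact hsum

theorem integral_exp_mul_integral_sub_mean_le (hg : Measurable g) (hab : ∀ z, g z ∈ Icc a b)
    {n : ℕ} (hn : 0 < n) (t : ℝ) :
    ∫ S, exp (t * (∫ z, g z ∂μ - (n : ℝ)⁻¹ * ∑ j, g (S j))) ∂(Measure.pi fun _ : Fin n => μ) ≤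
      exp (t ^ 2 * (b - a) ^ 2 / (8 * n)) := by
  have hn' : (n : ℝ) ≠ 0 := by positivity
  have hrescale : ∀ S : Fin n → Z, t * (∫ z, g z ∂μ - (n : ℝ)⁻¹ * ∑ j, g (S j)) =
      t / n * ∑ j, (∫ z, g z ∂μ - g (S j)) := by
    intro S
    rw [Finset.sum_sub_distrib, Finset.sum_const, Finset.card_univ, Fintype.card_fin,
      nsmul_eq_mul]
    field_simp
  calc _ = mgf (fun S : Fin n → Z => ∑ j, (∫ z, g z ∂μ - g (S j))) (Measure.pi fun _ => μ)
        (t / n) := by simp only [mgf, hrescale]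
    _ ≤ exp ((n * (‖b - a‖₊ / 2) ^ 2 : ℝ≥0) * (t / n) ^ 2 / 2) :=
        (hasSubgaussianMGF_sum_integral_sub μ hg hab n).mgf_le (t / n)
    _ = exp (t ^ 2 * (b - a) ^ 2 / (8 * n)) := by
        congr 1
        push_cast
        rw [Real.norm_eq_abs, div_pow, sq_abs]
        field_simp
        ring

theorem integrable_exp_mul_integral_sub_mean {H : Type*} [MeasurableSpace H] (Q : Measure H)
    [IsFiniteMeasure Q] {ℓ : H → Z → ℝ} (hℓ : Measurable fun p : H × Z => ℓ p.1 p.2)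
    (hab : ∀ h z, ℓ h z ∈ Icc a b) {n : ℕ} (hn : 0 < n) (t : ℝ) :
    Integrable (fun q : (Fin n → Z) × H =>
      exp (t * (∫ z, ℓ q.2 z ∂μ - (n : ℝ)⁻¹ * ∑ j, ℓ q.2 (q.1 j))))
      ((Measure.pi fun _ => μ).prod Q) := by
  have hrisk : ∀ h, ∫ z, ℓ h z ∂μ ∈ Icc a b := fun h =>
    (convex_Icc a b).integral_mem isClosed_Icc (ae_of_all _ (hab h))
      (.of_mem_Icc a b (hℓ.comp measurable_prodMk_left).aemeasurable (ae_of_all _ (hab h)))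
  have hmean : ∀ h (S : Fin n → Z), (n : ℝ)⁻¹ * ∑ j, ℓ h (S j) ∈ Icc a b := by
    intro h S
    rw [Finset.mul_sum]
    exact (convex_Icc a b).sum_mem (w := fun _ => (n : ℝ)⁻¹) (fun _ _ => by positivity)
      (by simp [hn.ne']) fun j _ => hab h (S j)
  have hmeas : Measurable fun q : (Fin n → Z) × H =>
      ∫ z, ℓ q.2 z ∂μ - (n : ℝ)⁻¹ * ∑ j, ℓ q.2 (q.1 j) := by
    refine (hℓ.stronglyMeasurable.integral_prod_right'.measurable.comp measurable_snd).sub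
      (measurable_const.mul (Finset.measurable_sum _ fun j _ => ?_))
    exact hℓ.comp (measurable_snd.prodMk ((measurable_pi_apply j).comp measurable_fst))
  refine integrable_exp_mul_of_mem_Icc (a := a - b) (b := b - a) hmeas.aemeasurable
    (ae_of_all _ fun q => ?_)
  obtain ⟨hR₁, hR₂⟩ := hrisk q.2
  obtain ⟨hm₁, hm₂⟩ := hmean q.2 q.1
  constructor <;> linarith

end Hoeffding

theorem stmt19_general {Z H : Type*} [MeasurableSpace Z] [MeasurableSpace H]
    (μ : Measure Z) [IsProbabilityMeasure μ] (n : ℕ) (hn : 0 < n)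
    (ℓ : H → Z → ℝ) (hℓmeas : Measurable fun p : H × Z => ℓ p.1 p.2)
    (hℓ01 : ∀ h z, ℓ h z ∈ Set.Icc (0 : ℝ) 1)
    (Q : Measure H) [IsProbabilityMeasure Q]
    (lam : ℝ) (δ₀ : ℝ) (hδ₀ : δ₀ ∈ Set.Ioo (0 : ℝ) 1) :
    ENNReal.ofReal (1 - δ₀) ≤
      (Measure.pi fun _ : Fin n => μ)
        {S | ∫ h, Real.exp (lam * ((∫ z, ℓ h z ∂μ) - (n : ℝ)⁻¹ * ∑ j, ℓ h (S j))) ∂Q ≤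
              Real.exp (lam ^ 2 / (8 * n)) / δ₀} := by
  have hF := integrable_exp_mul_integral_sub_mean μ Q hℓmeas hℓ01 hn lam
  have hE : ∫ S, ∫ h, exp (lam * ((∫ z, ℓ h z ∂μ) - (n : ℝ)⁻¹ * ∑ j, ℓ h (S j))) ∂Q
      ∂(Measure.pi fun _ : Fin n => μ) ≤ exp (lam ^ 2 / (8 * n)) :=
    integral_integral_le_of_forall_integral_le hF fun h => by
      simpa using integral_exp_mul_integral_sub_mean_le μ
        (hℓmeas.comp measurable_prodMk_left) (hℓ01 h) hn lam
  exact ofReal_one_sub_le_measure_le_of_integral_le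
    (ae_of_all _ fun S => integral_nonneg fun h => (exp_pos _).le)
    hF.integral_prod_left (exp_pos _) hδ₀.1 hE

/-- Prior-exponential-moment bound: with probability at least `1 − δ₀` over an i.i.d. sample
`S` of size `n`, `∫ exp (λ (R(h) − R̂_S(h))) dQ(h) ≤ exp (λ²/(8n)) / δ₀`. -/
theorem stmt19 {Z H : Type*} [MeasurableSpace Z] [MeasurableSpace H]
    (μ : Measure Z) [IsProbabilityMeasure μ] (n : ℕ) (hn : 0 < n)
    (ℓ : H → Z → ℝ) (hℓmeas : Measurable fun p : H × Z => ℓ p.1 p.2)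
    (hℓ01 : ∀ h z, ℓ h z ∈ Set.Icc (0 : ℝ) 1)
    (Q : Measure H) [IsProbabilityMeasure Q]
    (lam : ℝ) (hlam : 0 < lam) (δ₀ : ℝ) (hδ₀ : δ₀ ∈ Set.Ioo (0 : ℝ) 1) :
    ENNReal.ofReal (1 - δ₀) ≤
      (Measure.pi fun _ : Fin n => μ)
        {S | ∫ h, Real.exp (lam * ((∫ z, ℓ h z ∂μ) - (n : ℝ)⁻¹ * ∑ j, ℓ h (S j))) ∂Q ≤
              Real.exp (lam ^ 2 / (8 * n)) / δ₀} :=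
  stmt19_general μ n hn ℓ hℓmeas hℓ01 Q lam δ₀ hδ₀
end
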